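/- arXiv:2208.09928 — 3 statements merged into one kernel-verified Lean document; each statement's English description precedes it below -/
import Mathlib

section
/- For every s ∈ ℝ and every integer n ≥ 1, the polynomial P_n^s factors as P_n^s(x) = (n!)^{-s} · x · ∏_{k=1}^{n-1} (x + k^s). In particular P_n^s is real-rooted with all roots ≤ 0. -/
open Finset Polynomial MeasureTheory Filter

/-- The polynomials `Pₙˢ`, defined by `P₀ˢ = 1` and
`Pₙˢ(x) = (x / nˢ) · ∑_{k=0}^{n-1} Pₖˢ(x)` for `n ≥ 1`. -/
noncomputable def Pp (s : ℝ) : ℕ → Polynomial ℝ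
  | 0 => 1
  | n + 1 => Polynomial.C ((((n + 1 : ℕ)) : ℝ) ^ s)⁻¹ * Polynomial.X *
      ∑ k ∈ (Finset.range (n + 1)).attach, Pp s k.1
  decreasing_by exact Finset.mem_range.mp k.2

/-- `A_{n,k}(s)` : the coefficient of `x^k` in `Pₙˢ(x)`. -/
noncomputable def A (n k : ℕ) (s : ℝ) : ℝ := (Pp s n).coeff k


/-! Summing the recursion shows that the partial sums `Sₙ = ∑_{k ≤ n} Pₖˢ` telescope into a product:
`Sₙ₊₁ = Sₙ + Pₙ₊₁ˢ = Sₙ · (1 + x / (n+1)ˢ)`, so `Sₙ = (n!)^{-s} ∏_{k=1}^{n} (x + kˢ)` and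
`Pₙ₊₁ˢ = (x / (n+1)ˢ) · Sₙ`. All roots of the product are `0` and `-kˢ ≤ 0`. -/

open scoped Nat

theorem Pp_succ_eq_sum (s : ℝ) (n : ℕ) :
    Pp s (n + 1) = C (((n + 1 : ℕ) : ℝ) ^ s)⁻¹ * X * ∑ k ∈ range (n + 1), Pp s k := by
  rw [Pp, sum_attach (range (n + 1)) (Pp s)]

theorem factorial_succ_rpow_neg (n : ℕ) (s : ℝ) :
    (((n + 1)! : ℕ) : ℝ) ^ (-s) = (n ! : ℝ) ^ (-s) * (((n + 1 : ℕ) : ℝ) ^ s)⁻¹ := by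
  rw [Nat.factorial_succ, Nat.cast_mul, Real.mul_rpow (by positivity) (by positivity),
    Real.rpow_neg (Nat.cast_nonneg _), mul_comm]

theorem sum_range_Pp (s : ℝ) (n : ℕ) :
    ∑ k ∈ range (n + 1), Pp s k = C ((n ! : ℝ) ^ (-s)) * ∏ k ∈ Icc 1 n, (X + C ((k : ℝ) ^ s)) := by
  induction n with
  | zero => simp [Pp]
  | succ n ih =>
    have hinv : C (((n + 1 : ℕ) : ℝ) ^ s)⁻¹ * C (((n + 1 : ℕ) : ℝ) ^ s) = 1 := by
      rw [← C_mul, inv_mul_cancel₀ (by positivity), C_1]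
    rw [sum_range_succ, ih, Pp_succ_eq_sum, ih, prod_Icc_succ_top (by omega),
      factorial_succ_rpow_neg, C_mul]
    linear_combination -(C ((n ! : ℝ) ^ (-s)) * ∏ k ∈ Icc 1 n, (X + C ((k : ℝ) ^ s))) * hinv

theorem Pp_succ_eq_prod (s : ℝ) (n : ℕ) :
    Pp s (n + 1) = C (((n + 1)! : ℝ) ^ (-s)) * (X * ∏ k ∈ Icc 1 n, (X + C ((k : ℝ) ^ s))) := by
  rw [Pp_succ_eq_sum, sum_range_Pp, factorial_succ_rpow_neg, C_mul]
  ring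

theorem exists_nonpos_eq_of_isRoot_map_C_mul_X_mul_prod {ι : Type*} (t : Finset ι) {c : ℝ}
    (hc : c ≠ 0) {b : ι → ℝ} (hb : ∀ i ∈ t, 0 ≤ b i) {z : ℂ}
    (hz : ((C c * (X * ∏ i ∈ t, (X + C (b i)))).map (algebraMap ℝ ℂ)).IsRoot z) :
    ∃ r : ℝ, r ≤ 0 ∧ z = r := by
  simp only [IsRoot, Polynomial.map_mul, Polynomial.map_prod, Polynomial.map_add, map_C, map_X,
    eval_mul, eval_C, eval_X, eval_prod, eval_add, Complex.coe_algebraMap, mul_eq_zero,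
    Complex.ofReal_eq_zero, hc, false_or, prod_eq_zero_iff] at hz
  rcases hz with rfl | ⟨i, hi, hzi⟩
  · exact ⟨0, le_rfl, by simp⟩
  · exact ⟨-b i, neg_nonpos.mpr (hb i hi), by push_cast; linear_combination hzi⟩

/-- For every `s ∈ ℝ` and `n ≥ 1`, `Pₙˢ(x) = (n!)^{-s} · x · ∏_{k=1}^{n-1} (x + kˢ)`;
in particular `Pₙˢ` is real-rooted with all roots `≤ 0`. -/
theorem factorization_and_real_rooted (s : ℝ) (n : ℕ) (hn : 1 ≤ n) :
    Pp s n = Polynomial.C ((n.factorial : ℝ) ^ (-s)) *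
      (Polynomial.X *
        ∏ k ∈ Finset.Icc 1 (n - 1), (Polynomial.X + Polynomial.C ((k : ℝ) ^ s))) ∧
    ∀ z : ℂ, ((Pp s n).map (algebraMap ℝ ℂ)).IsRoot z → ∃ r : ℝ, r ≤ 0 ∧ z = (r : ℂ) := by
  obtain ⟨m, rfl⟩ : ∃ m, n = m + 1 := ⟨n - 1, by omega⟩
  have hfac := Pp_succ_eq_prod s m
  refine ⟨hfac, fun z hz => ?_⟩
  rw [hfac] at hz
  exact exists_nonpos_eq_of_isRoot_map_C_mul_X_mul_prod _ (by positivity)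
    (fun k _ => Real.rpow_nonneg k.cast_nonneg s) hz
end

section
/- For every integer n ≥ 1 and every integer k with 0 ≤ k ≤ n, one has A_{n,k}(1) = c(n,k)/n!, where c(n,k) denotes the unsigned Stirling number of the first kind, i.e. the number of permutations of an n-element set with exactly k cycles. -/
open Finset Polynomial MeasureTheory Filter

/-- The number of cycles (orbits, including fixed points) of a permutation of `Fin n`. -/
noncomputable def cycleCount (n : ℕ) (σ : Equiv.Perm (Fin n)) : ℕ :=
  σ.cycleType.card + (n - σ.support.card)

/-- The unsigned Stirling number of the first kind: the number of permutations of an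
`n`-element set with exactly `k` cycles. -/
noncomputable def stirling1 (n k : ℕ) : ℕ :=
  Nat.card {σ : Equiv.Perm (Fin n) // cycleCount n σ = k}

/-!
Writing `Sₙ = P₀ + ⋯ + Pₙ`, the recursion reads `(n+1)ˢ Pₙ₊₁ = x Sₙ`, and subtracting two
consecutive instances gives `(n+2)ˢ Pₙ₊₂ = ((n+1)ˢ + x) Pₙ₊₁`. At `s = 1` this says that
`n! Pₙ¹` is the rising factorial `x (x+1) ⋯ (x+n-1)`.

The cycle-counting polynomial `∑_σ x^(cycles σ)` over permutations of `n` points obeys the same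
recursion: every permutation of `{0, …, n}` is uniquely `(0 p) ∘ σ'` with `σ'` fixing `0`, and
the transposition either leaves `0` as a new fixed point (`p = 0`) or inserts `0` into the cycle
of `p`, which keeps the number of cycles. Comparing coefficients gives the theorem.
-/

namespace Equiv.Perm

variable {α : Type*} [DecidableEq α] [Fintype α]

theorem card_parts_partition (σ : Perm α) :
    Multiset.card σ.partition.parts =
      Multiset.card σ.cycleType + (Fintype.card α - #σ.support) := by
  rw [parts_partition, Multiset.card_add, Multiset.card_replicate]

theorem IsCycle.card_cycleType_swap_mul_add_card_support {g : Perm α} (hg : g.IsCycle) {x : α}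
    (hx : g x ≠ x) :
    Multiset.card (swap x (g x) * g).cycleType + #g.support =
      #(swap x (g x) * g).support + 2 := by
  by_cases hgg : g (g x) = x
  · have hg2 : g = swap x (g x) := hg.eq_swap_of_apply_apply_eq_self hx hgg
    have h1 : swap x (g x) * g = 1 := (congrArg _ hg2).trans (swap_mul_self _ _)
    have h2 : #g.support = 2 := by rw [hg2, card_support_swap hx.symm]
    rw [h1, h2, cycleType_one, support_one, Multiset.card_zero, card_empty]
  · have hxg : x ∈ g.support := mem_support.2 hx
    have hpos : 0 < #g.support := card_pos.2 ⟨x, hxg⟩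
    rw [(hg.swap_mul hx hgg).cycleType, Multiset.card_singleton, support_swap_mul_eq g x hgg,
      sdiff_singleton_eq_erase, card_erase_of_mem hxg]
    omega

theorem card_parts_partition_swap_mul {f : Perm α} {x : α} (hx : f x ≠ x) :
    Multiset.card (swap x (f x) * f).partition.parts = Multiset.card f.partition.parts + 1 := by
  set g := f.cycleOf x
  set h := f * g⁻¹
  have hg : g.IsCycle := isCycle_cycleOf f hx
  have hgx : g x = f x := cycleOf_apply_self f x
  have hgh : g.Disjoint h := (disjoint_mul_inv_of_mem_cycleFactorsFinset
    (cycleOf_mem_cycleFactorsFinset_iff.2 (mem_support.2 hx))).symm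
  have hf : f = g * h := by rw [hgh.commute.eq, inv_mul_cancel_right]
  have hsf : swap x (f x) * f = (swap x (g x) * g) * h := by rw [hgx, hf, mul_assoc]
  have hsgh : (swap x (g x) * g).Disjoint h :=
    hgh.mono (fun y hy => (mem_support_swap_mul_imp_mem_support_ne hy).1) le_rfl
  have hsplit := hg.card_cycleType_swap_mul_add_card_support (hgx ▸ hx)
  have hle_swap := (swap x (f x) * f).support.card_le_univ
  have hle := f.support.card_le_univ
  rw [hsf, hsgh.card_support_mul] at hle_swap
  rw [hf, hgh.card_support_mul] at hle
  rw [card_parts_partition, card_parts_partition, hsf, hsgh.cycleType_mul, hsgh.card_support_mul,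
    hf, hgh.cycleType_mul, hgh.card_support_mul, hg.cycleType, Multiset.card_add,
    Multiset.card_add, Multiset.card_singleton]
  omega

theorem card_parts_partition_swap_mul_of_apply_eq_self {τ : Perm α} {a b : α} (hab : a ≠ b)
    (ha : τ a = a) :
    Multiset.card (swap a b * τ).partition.parts + 1 = Multiset.card τ.partition.parts := by
  have hσa : (swap a b * τ) a = b := by rw [mul_apply, ha, swap_apply_left]
  have h := card_parts_partition_swap_mul (f := swap a b * τ) (x := a) (by rw [hσa]; exact hab.symm)
  rwa [hσa, ← mul_assoc, swap_mul_self, one_mul, eq_comm] at h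

end Equiv.Perm

open Equiv Equiv.Perm

theorem cycleCount_eq_card_parts_partition (n : ℕ) (σ : Perm (Fin n)) :
    cycleCount n σ = Multiset.card σ.partition.parts := by
  rw [card_parts_partition, Fintype.card_fin, cycleCount]

theorem decomposeFin_symm_eq_swap_mul_extendDomain {n : ℕ} (p : Fin (n + 1)) (e : Perm (Fin n)) :
    decomposeFin.symm (p, e) = swap 0 p * e.extendDomain (finSuccAboveEquiv 0) := by
  ext i
  refine Fin.cases ?_ (fun x => ?_) i
  · simp [extendDomain_apply_not_subtype]
  · have hx := extendDomain_apply_image e (finSuccAboveEquiv 0) x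
    simp only [finSuccAboveEquiv_apply, Fin.succAbove_zero] at hx
    simp [hx]

theorem cycleCount_decomposeFin_symm {n : ℕ} (p : Fin (n + 1)) (e : Perm (Fin n)) :
    cycleCount (n + 1) (decomposeFin.symm (p, e)) = cycleCount n e + if p = 0 then 1 else 0 := by
  rw [decomposeFin_symm_eq_swap_mul_extendDomain]
  set E := e.extendDomain (finSuccAboveEquiv 0)
  have hE : cycleCount (n + 1) E = cycleCount n e + 1 := by
    have hle := e.support.card_le_univ
    simp only [cycleCount, E, cycleType_extendDomain, card_support_extend_domain,
      Fintype.card_fin] at hle ⊢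
    omega
  split_ifs with hp
  · rw [hp, swap_self, ← Perm.one_def, one_mul, hE]
  · have hE0 : E 0 = 0 := extendDomain_apply_not_subtype _ _ (by simp)
    have hjoin := card_parts_partition_swap_mul_of_apply_eq_self (Ne.symm hp) hE0
    rw [← cycleCount_eq_card_parts_partition, ← cycleCount_eq_card_parts_partition, hE] at hjoin
    omega

theorem sum_X_pow_cycleCount (R : Type*) [CommSemiring R] (n : ℕ) :
    ∑ σ : Perm (Fin n), (X : R[X]) ^ cycleCount n σ = ascPochhammer R n := by
  induction n with
  | zero => simp [cycleCount]
  | succ n ih =>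
    rw [← decomposeFin.symm.sum_comp, Fintype.sum_prod_type, Fin.sum_univ_succ,
      ascPochhammer_succ_right, ← ih]
    simp only [cycleCount_decomposeFin_symm, ↓reduceIte, pow_succ, ← sum_mul, Fin.succ_ne_zero,
      add_zero, sum_const, card_univ, Fintype.card_fin, nsmul_eq_mul]
    ring

theorem stirling1_eq_coeff_ascPochhammer (R : Type*) [CommSemiring R] (n k : ℕ) :
    (stirling1 n k : R) = (ascPochhammer R n).coeff k := by
  rw [← sum_X_pow_cycleCount, finsetSum_coeff]
  simp [coeff_X_pow, stirling1, Fintype.card_subtype, eq_comm]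

theorem Pp_succ (s : ℝ) (n : ℕ) :
    Pp s (n + 1) = C ((((n + 1 : ℕ)) : ℝ) ^ s)⁻¹ * X * ∑ k ∈ range (n + 1), Pp s k := by
  rw [Pp, Finset.sum_attach (range (n + 1)) (Pp s)]

theorem C_rpow_mul_Pp_succ (s : ℝ) (n : ℕ) :
    C ((((n + 1 : ℕ)) : ℝ) ^ s) * Pp s (n + 1) = X * ∑ k ∈ range (n + 1), Pp s k := by
  have h : (((n + 1 : ℕ)) : ℝ) ^ s ≠ 0 := (Real.rpow_pos_of_pos (by positivity) s).ne'
  rw [Pp_succ, ← mul_assoc, ← mul_assoc, ← C_mul, mul_inv_cancel₀ h, C_1, one_mul]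

theorem C_rpow_mul_Pp_succ_succ (s : ℝ) (n : ℕ) :
    C ((((n + 2 : ℕ)) : ℝ) ^ s) * Pp s (n + 2) =
      (C ((((n + 1 : ℕ)) : ℝ) ^ s) + X) * Pp s (n + 1) := by
  rw [C_rpow_mul_Pp_succ, sum_range_succ, mul_add, ← C_rpow_mul_Pp_succ, add_mul]

theorem C_factorial_mul_Pp_one : ∀ n : ℕ, C (n.factorial : ℝ) * Pp 1 n = ascPochhammer ℝ n
  | 0 => by simp [Pp]
  | 1 => by simp [Pp_succ, Pp]
  | n + 2 => by
    have h := C_rpow_mul_Pp_succ_succ 1 n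
    simp only [Real.rpow_one, map_natCast] at h
    calc C ((n + 2).factorial : ℝ) * Pp 1 (n + 2)
        = C ((n + 1).factorial : ℝ) * (((n + 2 : ℕ) : ℝ[X]) * Pp 1 (n + 2)) := by
          rw [Nat.factorial_succ (n + 1), Nat.cast_mul, C_mul, map_natCast]; ring
      _ = C ((n + 1).factorial : ℝ) * Pp 1 (n + 1) * (X + ((n + 1 : ℕ) : ℝ[X])) := by
          rw [h]; ring
      _ = ascPochhammer ℝ (n + 2) := by
          rw [C_factorial_mul_Pp_one (n + 1), ascPochhammer_succ_right ℝ (n + 1)]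

theorem coeff_at_one_eq_stirling_general (n : ℕ) (k : ℕ) :
    A n k 1 = (stirling1 n k : ℝ) / (n.factorial : ℝ) := by
  have hP : Pp 1 n = C (n.factorial : ℝ)⁻¹ * ascPochhammer ℝ n := by
    rw [← C_factorial_mul_Pp_one, ← mul_assoc, ← C_mul,
      inv_mul_cancel₀ (Nat.cast_ne_zero.2 n.factorial_ne_zero), C_1, one_mul]
  rw [A, hP, coeff_C_mul, ← stirling1_eq_coeff_ascPochhammer, inv_mul_eq_div]

/-- `A_{n,k}(1) = c(n,k)/n!`, where `c(n,k)` is the unsigned Stirling number of the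
first kind. -/
theorem coeff_at_one_eq_stirling (n : ℕ) (hn : 1 ≤ n) (k : ℕ) (hk : k ≤ n) :
    A n k 1 = (stirling1 n k : ℝ) / (n.factorial : ℝ) :=
  coeff_at_one_eq_stirling_general n k
end

section
/- For every integer n ≥ 6 one has (n+1)/2 − H_n > 1; consequently there exists at least one integer k₀ with H_n < k₀ < (n+1)/2, and for every such integer k₀ there exists a unique s ∈ (0,1) with μ_n(s) = k₀. -/
open Finset Polynomial MeasureTheory Filter

/-- `μₙ(s) = 1 + ∑_{k=1}^{n-1} 1/(1+kˢ)`. -/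
noncomputable def mu (n : ℕ) (s : ℝ) : ℝ :=
  1 + ∑ k ∈ Finset.Icc 1 (n - 1), 1 / (1 + (k : ℝ) ^ s)

/-- The `n`-th harmonic number `Hₙ = ∑_{k=1}^n 1/k`. -/
noncomputable def H (n : ℕ) : ℝ := ∑ k ∈ Finset.Icc 1 n, 1 / (k : ℝ)

/-!
Since `μₙ(0) = (n+1)/2` and `μₙ(1) = Hₙ`, and `μₙ` is continuous and strictly decreasing,
every value strictly between `Hₙ` and `(n+1)/2` is taken exactly once on `(0,1)`. The gap
`(n+1)/2 - Hₙ` exceeds `1` from `n = 6` on (`H₆ = 49/20`, and each further step adds `1/2`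
to the mean but less than `1/2` to `Hₙ`), so an integer lies in it.
-/

lemma H_succ (n : ℕ) : H (n + 1) = H n + 1 / ((n : ℝ) + 1) := by
  rw [H, H, Finset.sum_Icc_succ_top (by omega)]
  push_cast
  rfl

lemma H_six : H 6 = 49 / 20 := by
  norm_num [H, Finset.sum_Icc_succ_top]

lemma H_lt_half_pred {n : ℕ} (hn : 6 ≤ n) : H n < ((n : ℝ) - 1) / 2 := by
  induction n, hn using Nat.le_induction with
  | base => rw [H_six]; norm_num
  | succ m hm ih =>
    have hm' : (6 : ℝ) ≤ m := by exact_mod_cast hm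
    have hstep : 1 / ((m : ℝ) + 1) < 1 / 2 := one_div_lt_one_div_of_lt two_pos (by linarith)
    rw [H_succ]
    push_cast
    linarith

lemma mu_one : mu 1 = 1 := by
  ext s
  simp [mu]

lemma mu_succ {n : ℕ} (hn : 1 ≤ n) (s : ℝ) :
    mu (n + 1) s = mu n s + 1 / (1 + (n : ℝ) ^ s) := by
  obtain ⟨m, rfl⟩ : ∃ m, n = m + 1 := ⟨n - 1, by omega⟩
  rw [mu, mu, Nat.add_sub_cancel, Nat.add_sub_cancel, Finset.sum_Icc_succ_top (by omega)]
  push_cast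
  ring

lemma mu_apply_zero {n : ℕ} (hn : 1 ≤ n) : mu n 0 = ((n : ℝ) + 1) / 2 := by
  induction n, hn using Nat.le_induction with
  | base => rw [mu_one]; norm_num
  | succ m hm ih =>
    rw [mu_succ hm, ih, Real.rpow_zero]
    push_cast
    ring

lemma mu_apply_one {n : ℕ} (hn : 1 ≤ n) : mu n 1 = H n := by
  induction n, hn using Nat.le_induction with
  | base => simp [mu_one, H]
  | succ m hm ih =>
    rw [mu_succ hm, ih, Real.rpow_one, H_succ, add_comm 1 (m : ℝ)]

lemma continuous_mu (n : ℕ) : Continuous (mu n) := by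
  unfold mu
  refine continuous_const.add (continuous_finsetSum _ fun k hk => ?_)
  have hk : (0 : ℝ) < k := by exact_mod_cast (Finset.mem_Icc.mp hk).1
  refine continuous_const.div (continuous_const.add (Real.continuous_const_rpow hk.ne')) ?_
  intro s
  positivity

lemma one_div_one_add_rpow_antitone {x : ℝ} (hx : 1 ≤ x) : Antitone fun s : ℝ => 1 / (1 + x ^ s) :=
  fun _ _ hst => one_div_le_one_div_of_le (by positivity)
    (add_le_add_right (Real.rpow_le_rpow_of_exponent_le hx hst) 1)

lemma one_div_one_add_rpow_strictAnti {x : ℝ} (hx : 1 < x) :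
    StrictAnti fun s : ℝ => 1 / (1 + x ^ s) :=
  fun _ _ hst => one_div_lt_one_div_of_lt (by positivity)
    (add_lt_add_right (Real.rpow_lt_rpow_of_exponent_lt hx hst) 1)

lemma mu_strictAnti {n : ℕ} (hn : 3 ≤ n) : StrictAnti (mu n) := by
  intro s t hst
  refine add_lt_add_right (Finset.sum_lt_sum (fun k hk => ?_) ⟨2, ?_, ?_⟩) 1
  · exact one_div_one_add_rpow_antitone (x := k) (by exact_mod_cast (Finset.mem_Icc.mp hk).1)
      hst.le
  · exact Finset.mem_Icc.mpr ⟨by norm_num, by omega⟩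
  · exact one_div_one_add_rpow_strictAnti (x := (2 : ℕ)) (by norm_num) hst

/-- For `n ≥ 6`, `(n+1)/2 - Hₙ > 1`; hence there is an integer `k₀` with
`Hₙ < k₀ < (n+1)/2`, and each such integer is attained as `μₙ(s) = k₀` for a unique
`s ∈ (0,1)`. -/
theorem integer_between_Hn_and_mean (n : ℕ) (hn : 6 ≤ n) :
    (((n : ℝ) + 1) / 2 - H n > 1) ∧
    (∃ k0 : ℤ, H n < (k0 : ℝ) ∧ (k0 : ℝ) < ((n : ℝ) + 1) / 2) ∧
    (∀ k0 : ℤ, H n < (k0 : ℝ) → (k0 : ℝ) < ((n : ℝ) + 1) / 2 →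
      ∃! s : ℝ, s ∈ Set.Ioo (0 : ℝ) 1 ∧ mu n s = (k0 : ℝ)) := by
  have hgap : ((n : ℝ) + 1) / 2 - H n > 1 := by
    linarith [H_lt_half_pred hn]
  refine ⟨hgap, ⟨⌊H n⌋ + 1, ?_, ?_⟩, fun k0 hlow hhigh => ?_⟩
  · exact_mod_cast Int.lt_floor_add_one (H n)
  · push_cast
    linarith [Int.floor_le (H n)]
  · have hk0 : (k0 : ℝ) ∈ Set.Ioo (mu n 1) (mu n 0) := by
      rw [mu_apply_zero (by omega), mu_apply_one (by omega)]
      exact ⟨hlow, hhigh⟩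
    obtain ⟨s, hs, hmus⟩ :=
      intermediate_value_Ioo' zero_le_one (continuous_mu n).continuousOn hk0
    refine ⟨s, ⟨hs, hmus⟩, fun t ⟨_, hmut⟩ => ?_⟩
    exact (mu_strictAnti (by omega)).injective (hmut.trans hmus.symm)
end
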